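/- Any class of finite digraphs for which there is a uniform bound N on the size of sets of pairwise disjoint edges is well quasi-ordered under the surjective homomorphism ordering (and under the surjective strong homomorphism ordering). -/

import Mathlib

/-- A finite structure with a single binary relation (digraph/graph model). -/
structure FinBinRel where
  n : ℕ
  rel : Fin n → Fin n → Prop

/-- `f` is a homomorphism from `A` to `B`: it maps related pairs to related pairs. -/
def IsHom (A B : FinBinRel) (f : Fin A.n → Fin B.n) : Prop :=
  ∀ x y, A.rel x y → B.rel (f x) (f y)

/-- `f` is a strong homomorphism: a homomorphism such that every related pair of
elements of the image is the image of a related pair. -/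
def IsStrongHom (A B : FinBinRel) (f : Fin A.n → Fin B.n) : Prop :=
  IsHom A B f ∧
    ∀ p q : Fin B.n, B.rel p q → (∃ a, f a = p) → (∃ b, f b = q) →
      ∃ u v, A.rel u v ∧ f u = p ∧ f v = q

/-- Homomorphic image ordering: `A ⪯ B` iff there is a surjective homomorphism `B → A`. -/
def HomLe (A B : FinBinRel) : Prop :=
  ∃ f : Fin B.n → Fin A.n, Function.Surjective f ∧ IsHom B A f

/-- Strong homomorphic image ordering: `A ⪯ B` iff there is a surjective strong
homomorphism `B → A`. -/
def StrongLe (A B : FinBinRel) : Prop :=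
  ∃ f : Fin B.n → Fin A.n, Function.Surjective f ∧ IsStrongHom B A f

/-- Isomorphism of binary relational structures. -/
def BinIso (A B : FinBinRel) : Prop :=
  ∃ e : Fin A.n ≃ Fin B.n, ∀ x y, A.rel x y ↔ B.rel (e x) (e y)

/-- A class `C` is well quasi-ordered by `r`: every infinite sequence of members of `C`
contains a "good pair". (For orderings on finite structures respecting size this is
equivalent to having no infinite antichain.) -/
def IsWqo (r : FinBinRel → FinBinRel → Prop) (C : Set FinBinRel) : Prop :=
  ∀ f : ℕ → FinBinRel, (∀ i, f i ∈ C) → ∃ i j, i < j ∧ r (f i) (f j)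

/-- A reflexive graph: symmetric relation with a loop at every vertex. -/
def ReflGraph (A : FinBinRel) : Prop :=
  (∀ x, A.rel x x) ∧ (∀ x y, A.rel x y → A.rel y x)

/-- An irreflexive graph: symmetric and loopless. -/
def IrrGraph (A : FinBinRel) : Prop :=
  (∀ x, ¬ A.rel x x) ∧ (∀ x y, A.rel x y → A.rel y x)

/-- The irreflexive complete graph on `n` vertices. -/
def Kirr (n : ℕ) : FinBinRel := ⟨n, fun i j => i ≠ j⟩

/-- The complete reflexive graph/digraph on `n` vertices (all pairs, including loops). -/
def Kcompl (n : ℕ) : FinBinRel := ⟨n, fun _ _ => True⟩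

/-- The subcomplete reflexive graph `N_{n,k}` (for `2k ≤ n`): the complete reflexive
graph on `n` vertices with the `k` disjoint edges `{0,1},{2,3},…,{2k-2,2k-1}` deleted. -/
def Ngraph (n k : ℕ) : FinBinRel :=
  ⟨n, fun i j => ¬ ∃ m, m < k ∧
      ((i.val = 2 * m ∧ j.val = 2 * m + 1) ∨ (j.val = 2 * m ∧ i.val = 2 * m + 1))⟩

/-- The subcomplete digraph `N⃗_{n,k}` (for `2k ≤ n`): the complete reflexive digraph
on `n` vertices with the `k` disjoint directed edges `(0,1),(2,3),…,(2k-2,2k-1)` removed. -/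
def Ndigraph (n k : ℕ) : FinBinRel :=
  ⟨n, fun i j => ¬ ∃ m, m < k ∧ i.val = 2 * m ∧ j.val = 2 * m + 1⟩

/-- `D` has a set of `k` pairwise disjoint edges (all `2k` endpoints distinct). -/
def HasDisjointEdges (D : FinBinRel) (k : ℕ) : Prop :=
  ∃ a b : Fin k → Fin D.n,
    Function.Injective (Sum.elim a b) ∧ ∀ i, D.rel (a i) (b i)


/-!
A maximal set of `k ≤ N` pairwise disjoint edges has `2k` endpoints covering every non-loop edge,
so each digraph of the class has a vertex cover `σ : Fin (2N+1) → Fin D.n`. Outside the cover the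
vertices form an independent set up to loops, so each of them is determined by its type: its
relations to the cover vertices and its loop. Hence `D` is described by a finite datum (the
equality and relation pattern on the cover and the set of occurring types) and a count vector in
`ℕ^types`. If two digraphs have the same datum and dominated counts, mapping the cover identically
and each type class of the larger digraph onto the corresponding class of the smaller one is a
surjective strong homomorphism; Dickson's lemma gives such a pair in every sequence.
-/

open Function Set

def IsVertexCover (D : FinBinRel) (S : Set (Fin D.n)) : Prop :=
  ∀ x y, D.rel x y → x ≠ y → x ∈ S ∨ y ∈ S

theorem hasDisjointEdges_zero (D : FinBinRel) : HasDisjointEdges D 0 :=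
  ⟨Fin.elim0, Fin.elim0, Sum.elim_injective.mpr ⟨isEmptyElim, isEmptyElim, isEmptyElim⟩,
    isEmptyElim⟩

theorem hasDisjointEdges_succ {D : FinBinRel} {k : ℕ} {a b : Fin k → Fin D.n}
    (hab : Injective (Sum.elim a b)) (hrel : ∀ i, D.rel (a i) (b i)) {x y : Fin D.n}
    (hxy : D.rel x y) (hne : x ≠ y) (hx : x ∉ range (Sum.elim a b))
    (hy : y ∉ range (Sum.elim a b)) : HasDisjointEdges D (k + 1) := by
  obtain ⟨ha, hb, hdisj⟩ := Sum.elim_injective.mp hab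
  simp only [Sum.elim_range, mem_union, mem_range, not_or, not_exists] at hx hy
  refine ⟨Fin.cons x a, Fin.cons y b, Sum.elim_injective.mpr ⟨?_, ?_, ?_⟩, ?_⟩
  · exact Fin.cons_injective_iff.mpr ⟨fun ⟨i, hi⟩ => hx.1 i hi, ha⟩
  · exact Fin.cons_injective_iff.mpr ⟨fun ⟨i, hi⟩ => hy.2 i hi, hb⟩
  · refine Fin.cases (Fin.cases hne fun j => Ne.symm (hx.2 j)) fun i => Fin.cases (hy.1 i) ?_
    exact fun j => by simpa using hdisj i j
  · exact Fin.cases (by simpa) (by simpa)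

theorem isVertexCover_of_maximal {D : FinBinRel} {k : ℕ} {a b : Fin k → Fin D.n}
    (hab : Injective (Sum.elim a b)) (hrel : ∀ i, D.rel (a i) (b i))
    (hmax : ¬ HasDisjointEdges D (k + 1)) : IsVertexCover D (range (Sum.elim a b)) := by
  intro x y hxy hne
  by_contra! h
  exact hmax (hasDisjointEdges_succ hab hrel hxy hne h.1 h.2)

theorem exists_maximal_disjointEdges {D : FinBinRel} {N : ℕ}
    (hD : ∀ k, HasDisjointEdges D k → k ≤ N) :
    ∃ k ≤ N, HasDisjointEdges D k ∧ ¬ HasDisjointEdges D (k + 1) := by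
  classical
  set k := Nat.findGreatest (HasDisjointEdges D) N
  refine ⟨k, Nat.findGreatest_le N,
    Nat.findGreatest_spec (Nat.zero_le N) (hasDisjointEdges_zero D), fun h => ?_⟩
  exact Nat.findGreatest_is_greatest (Nat.lt_succ_self k) (hD _ h) h

theorem exists_surjective_of_card_le {α β : Type*} [Finite α] [Finite β]
    (h : Nat.card β ≤ Nat.card α) (hne : Nonempty α → Nonempty β) : ∃ f : α → β, Surjective f := by
  have := Fintype.ofFinite α
  have := Fintype.ofFinite β
  rw [Nat.card_eq_fintype_card, Nat.card_eq_fintype_card] at h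
  refine exists_surjective_iff.mpr ⟨nonempty_fun.mpr ?_, Function.Embedding.nonempty_of_card_le h⟩
  exact (isEmpty_or_nonempty α).imp_right hne

/-- The `2k ≤ 2N` endpoints of a maximal set of disjoint edges, padded by one arbitrary vertex so
that every nonempty member of the class gets a cover indexed by the same type. -/
theorem exists_vertexCover_fin {D : FinBinRel} {N : ℕ} (hD : ∀ k, HasDisjointEdges D k → k ≤ N)
    (hn : 0 < D.n) : ∃ σ : Fin (2 * N + 1) → Fin D.n, IsVertexCover D (range σ) := by
  obtain ⟨k, hkN, ⟨a, b, hab, hrel⟩, hmax⟩ := exists_maximal_disjointEdges hD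
  let g : Option (Fin k ⊕ Fin k) → Fin D.n := fun o => o.elim ⟨0, hn⟩ (Sum.elim a b)
  have hcard : Nat.card (Option (Fin k ⊕ Fin k)) ≤ Nat.card (Fin (2 * N + 1)) := by
    simp only [Nat.card_eq_fintype_card, Fintype.card_option, Fintype.card_sum, Fintype.card_fin]
    omega
  obtain ⟨s, hs⟩ := exists_surjective_of_card_le hcard fun _ => ⟨none⟩
  refine ⟨g ∘ s, fun x y hxy hne => ?_⟩
  rw [hs.range_comp]
  exact (isVertexCover_of_maximal hab hrel hmax x y hxy hne).imp
    (fun ⟨i, hi⟩ => ⟨some i, hi⟩) (fun ⟨i, hi⟩ => ⟨some i, hi⟩)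

section Types

variable {M : ℕ}

abbrev NbhdType (M : ℕ) : Type := (Fin M → Prop × Prop) × Prop

def nbhdType (D : FinBinRel) (σ : Fin M → Fin D.n) (v : Fin D.n) : NbhdType M :=
  (fun a => (D.rel v (σ a), D.rel (σ a) v), D.rel v v)

def typeClass (D : FinBinRel) (σ : Fin M → Fin D.n) (t : NbhdType M) : Set (Fin D.n) :=
  {v | v ∉ range σ ∧ nbhdType D σ v = t}

noncomputable def typeCount (D : FinBinRel) (σ : Fin M → Fin D.n) (t : NbhdType M) : ℕ :=
  Nat.card (typeClass D σ t)

variable {D₁ D₂ : FinBinRel} {σ₁ : Fin M → Fin D₁.n} {σ₂ : Fin M → Fin D₂.n}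

noncomputable def glue (σ₁ : Fin M → Fin D₁.n) (σ₂ : Fin M → Fin D₂.n)
    (h : ∀ t, typeClass D₂ σ₂ t → typeClass D₁ σ₁ t) (v : Fin D₂.n) : Fin D₁.n :=
  open Classical in
  if hv : v ∈ range σ₂ then σ₁ hv.choose else h (nbhdType D₂ σ₂ v) ⟨v, hv, rfl⟩

variable {h : ∀ t, typeClass D₂ σ₂ t → typeClass D₁ σ₁ t}

theorem glue_apply_cover (heq : ∀ a b, σ₁ a = σ₁ b ↔ σ₂ a = σ₂ b) (a : Fin M) :
    glue σ₁ σ₂ h (σ₂ a) = σ₁ a := by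
  have hv : σ₂ a ∈ range σ₂ := mem_range_self a
  rw [glue, dif_pos hv]
  exact (heq _ _).mpr hv.choose_spec

theorem glue_apply_of_mem_typeClass {t : NbhdType M} (v : typeClass D₂ σ₂ t) :
    glue σ₁ σ₂ h v = h t v := by
  obtain ⟨v, hv, rfl⟩ := v
  rw [glue, dif_neg hv]

theorem glue_mem_typeClass {v : Fin D₂.n} (hv : v ∉ range σ₂) :
    glue σ₁ σ₂ h v ∈ typeClass D₁ σ₁ (nbhdType D₂ σ₂ v) :=
  glue_apply_of_mem_typeClass (h := h) ⟨v, hv, rfl⟩ ▸ (h _ _).2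

theorem exists_glue_eq (heq : ∀ a b, σ₁ a = σ₁ b ↔ σ₂ a = σ₂ b) (hs : ∀ t, Surjective (h t))
    (w : Fin D₁.n) : ∃ v, glue σ₁ σ₂ h v = w ∧ (w ∈ range σ₁ → v ∈ range σ₂) := by
  by_cases hw : w ∈ range σ₁
  · obtain ⟨a, rfl⟩ := hw
    exact ⟨σ₂ a, glue_apply_cover heq a, fun _ => mem_range_self a⟩
  · obtain ⟨v, hvw⟩ := hs _ ⟨w, hw, rfl⟩
    exact ⟨v, (glue_apply_of_mem_typeClass v).trans (congrArg Subtype.val hvw), hw.elim⟩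

theorem rel_cover_glue_iff (heq : ∀ a b, σ₁ a = σ₁ b ↔ σ₂ a = σ₂ b)
    (hrel : ∀ a b, D₁.rel (σ₁ a) (σ₁ b) ↔ D₂.rel (σ₂ a) (σ₂ b))
    (a : Fin M) (v : Fin D₂.n) :
    (D₁.rel (σ₁ a) (glue σ₁ σ₂ h v) ↔ D₂.rel (σ₂ a) v) ∧
      (D₁.rel (glue σ₁ σ₂ h v) (σ₁ a) ↔ D₂.rel v (σ₂ a)) := by
  by_cases hv : v ∈ range σ₂
  · obtain ⟨b, rfl⟩ := hv
    rw [glue_apply_cover heq]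
    exact ⟨hrel a b, hrel b a⟩
  · have ht := (glue_mem_typeClass (h := h) hv).2
    exact ⟨iff_of_eq (congrArg (fun t => (t.1 a).2) ht),
      iff_of_eq (congrArg (fun t => (t.1 a).1) ht)⟩

theorem rel_glue_iff (heq : ∀ a b, σ₁ a = σ₁ b ↔ σ₂ a = σ₂ b)
    (hrel : ∀ a b, D₁.rel (σ₁ a) (σ₁ b) ↔ D₂.rel (σ₂ a) (σ₂ b)) {v v' : Fin D₂.n}
    (hvv' : v ∈ range σ₂ ∨ v' ∈ range σ₂ ∨ v = v') :
    D₁.rel (glue σ₁ σ₂ h v) (glue σ₁ σ₂ h v') ↔ D₂.rel v v' := by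
  rcases hvv' with ⟨a, rfl⟩ | ⟨b, rfl⟩ | rfl
  · rw [glue_apply_cover heq]
    exact (rel_cover_glue_iff heq hrel a v').1
  · rw [glue_apply_cover heq]
    exact (rel_cover_glue_iff heq hrel b v).2
  · by_cases hv : v ∈ range σ₂
    · obtain ⟨a, rfl⟩ := hv
      rw [glue_apply_cover heq]
      exact hrel a a
    · exact iff_of_eq (congrArg Prod.snd (glue_mem_typeClass (h := h) hv).2)

theorem isHom_glue (heq : ∀ a b, σ₁ a = σ₁ b ↔ σ₂ a = σ₂ b)
    (hrel : ∀ a b, D₁.rel (σ₁ a) (σ₁ b) ↔ D₂.rel (σ₂ a) (σ₂ b))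
    (h₂ : IsVertexCover D₂ (range σ₂)) : IsHom D₂ D₁ (glue σ₁ σ₂ h) := by
  intro x y hxy
  refine (rel_glue_iff heq hrel ?_).mpr hxy
  by_cases hne : x = y
  · exact Or.inr (Or.inr hne)
  · exact (h₂ x y hxy hne).imp_right Or.inl

theorem isStrongHom_glue (heq : ∀ a b, σ₁ a = σ₁ b ↔ σ₂ a = σ₂ b)
    (hrel : ∀ a b, D₁.rel (σ₁ a) (σ₁ b) ↔ D₂.rel (σ₂ a) (σ₂ b))
    (h₁ : IsVertexCover D₁ (range σ₁)) (h₂ : IsVertexCover D₂ (range σ₂))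
    (hs : ∀ t, Surjective (h t)) : IsStrongHom D₂ D₁ (glue σ₁ σ₂ h) := by
  refine ⟨isHom_glue heq hrel h₂, fun p q hpq _ _ => ?_⟩
  obtain ⟨v, rfl, hv⟩ := exists_glue_eq heq hs p
  by_cases hcov : glue σ₁ σ₂ h v ∈ range σ₁ ∨ q ∈ range σ₁
  · obtain ⟨v', rfl, hv'⟩ := exists_glue_eq heq hs q
    refine ⟨v, v', (rel_glue_iff heq hrel ?_).mp hpq, rfl, rfl⟩
    exact hcov.imp hv (fun hq => Or.inl (hv' hq))
  · -- outside the cover `D₁` has only loops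
    obtain rfl : glue σ₁ σ₂ h v = q := by_contra fun hne => hcov (h₁ _ _ hpq hne)
    exact ⟨v, v, (rel_glue_iff heq hrel (Or.inr (Or.inr rfl))).mp hpq, rfl, rfl⟩

end Types

section Profile

variable {M : ℕ} {D₁ D₂ : FinBinRel}

abbrev Profile (M : ℕ) : Type :=
  (Fin M → Fin M → Prop) × (Fin M → Fin M → Prop) × (NbhdType M → Prop)

def profile (D : FinBinRel) (σ : Fin M → Fin D.n) : Profile M :=
  (fun a b => σ a = σ b, fun a b => D.rel (σ a) (σ b), fun t => typeCount D σ t = 0)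

theorem strongLe_of_profile_eq {σ₁ : Fin M → Fin D₁.n} {σ₂ : Fin M → Fin D₂.n}
    (h₁ : IsVertexCover D₁ (range σ₁)) (h₂ : IsVertexCover D₂ (range σ₂))
    (hp : profile D₁ σ₁ = profile D₂ σ₂) (hc : typeCount D₁ σ₁ ≤ typeCount D₂ σ₂) :
    StrongLe D₁ D₂ := by
  have heq : ∀ a b, σ₁ a = σ₁ b ↔ σ₂ a = σ₂ b := fun a b =>
    iff_of_eq (congrFun (congrFun (congrArg Prod.fst hp) a) b)
  have hrel : ∀ a b, D₁.rel (σ₁ a) (σ₁ b) ↔ D₂.rel (σ₂ a) (σ₂ b) := fun a b =>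
    iff_of_eq (congrFun (congrFun (congrArg (·.2.1) hp) a) b)
  have hsurj : ∀ t, ∃ f : typeClass D₂ σ₂ t → typeClass D₁ σ₁ t, Surjective f := by
    refine fun t => exists_surjective_of_card_le (hc t) fun hne => ?_
    have hsupp := iff_of_eq (congrFun (congrArg (·.2.2) hp) t)
    have hpos : typeCount D₂ σ₂ t ≠ 0 := Nat.card_ne_zero.mpr ⟨hne, inferInstance⟩
    exact (Nat.card_ne_zero.mp (mt hsupp.mp hpos)).1
  choose h hs using hsurj
  exact ⟨glue σ₁ σ₂ h, fun w => (exists_glue_eq heq hs w).imp fun _ hv => hv.1,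
    isStrongHom_glue heq hrel h₁ h₂ hs⟩

theorem strongLe_of_n_eq_zero (h₁ : D₁.n = 0) (h₂ : D₂.n = 0) : StrongLe D₁ D₂ :=
  ⟨fun v => (Fin.cast h₂ v).elim0, fun w => (Fin.cast h₁ w).elim0,
    fun x _ _ => (Fin.cast h₂ x).elim0, fun p _ _ _ _ => (Fin.cast h₁ p).elim0⟩

/-- The empty digraph has no cover when `0 < M`; it gets the datum `none`. -/
noncomputable def coverKey (M : ℕ) (D : FinBinRel) : Option (Profile M) × (NbhdType M → ℕ) :=
  open Classical in
  if h : ∃ σ : Fin M → Fin D.n, IsVertexCover D (range σ) then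
    (some (profile D h.choose), typeCount D h.choose)
  else (none, 0)

theorem strongLe_of_coverKey
    (h₁ : 0 < D₁.n → ∃ σ : Fin M → Fin D₁.n, IsVertexCover D₁ (range σ))
    (h₂ : 0 < D₂.n → ∃ σ : Fin M → Fin D₂.n, IsVertexCover D₂ (range σ))
    (hkey : (coverKey M D₁).1 = (coverKey M D₂).1) (hle : (coverKey M D₁).2 ≤ (coverKey M D₂).2) :
    StrongLe D₁ D₂ := by
  unfold coverKey at hkey hle
  split_ifs at hkey hle with e₁ e₂ e₂
  · exact strongLe_of_profile_eq e₁.choose_spec e₂.choose_spec (Option.some_injective _ hkey) hle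
  · exact strongLe_of_n_eq_zero (Nat.eq_zero_of_not_pos (mt h₁ e₁))
      (Nat.eq_zero_of_not_pos (mt h₂ e₂))

end Profile

theorem StrongLe.homLe {A B : FinBinRel} : StrongLe A B → HomLe A B
  | ⟨f, hs, hf⟩ => ⟨f, hs, hf.1⟩

theorem IsWqo.mono {r s : FinBinRel → FinBinRel → Prop} {C : Set FinBinRel}
    (hrs : ∀ A B, r A B → s A B) (h : IsWqo r C) : IsWqo s C := fun f hf =>
  (h f hf).imp fun _ => Exists.imp fun _ hij => ⟨hij.1, hrs _ _ hij.2⟩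

/-- Any class of digraphs with a uniform bound on the size of disjoint edge sets is
well quasi-ordered under both the standard and strong homomorphic image orderings. -/
theorem stmt_4 (N : ℕ) (C : Set FinBinRel)
    (hbound : ∀ D ∈ C, ∀ k, HasDisjointEdges D k → k ≤ N) :
    IsWqo HomLe C ∧ IsWqo StrongLe C := by
  have hcover : ∀ D ∈ C, 0 < D.n → ∃ σ : Fin (2 * N + 1) → Fin D.n, IsVertexCover D (range σ) :=
    fun D hD => exists_vertexCover_fin (hbound D hD)
  have hdickson : WellQuasiOrdered fun x y : Option (Profile (2 * N + 1)) ×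
      (NbhdType (2 * N + 1) → ℕ) => x.1 = y.1 ∧ x.2 ≤ y.2 :=
    (Finite.wellQuasiOrdered _).prod wellQuasiOrdered_le
  have hstrong : IsWqo StrongLe C := fun f hf => by
    obtain ⟨i, j, hij, hkey, hle⟩ := hdickson (coverKey (2 * N + 1) ∘ f)
    exact ⟨i, j, hij, strongLe_of_coverKey (hcover _ (hf i)) (hcover _ (hf j)) hkey hle⟩
  exact ⟨hstrong.mono fun _ _ => StrongLe.homLe, hstrong⟩
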